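/- In the Gaudin realization, the Gaudin Hamiltonians pairwise commute: [H^{(a)}, H^{(b)}] = 0 for all sites a, b ∈ {1,…,N}. -/

import Mathlib

/-- osp(1|2) Gaudin model data: sites, inhomogeneity parameters, and local
osp(1|2) operators with super-commutation relations across sites. -/
structure OspGaudinData (N : ℕ) (H : Type*) [AddCommGroup H] [Module ℂ H] where
  z : Fin N → ℂ
  z_inj : Function.Injective z
  h : Fin N → Module.End ℂ H
  Xp : Fin N → Module.End ℂ H
  Xm : Fin N → Module.End ℂ H
  vp : Fin N → Module.End ℂ H
  vm : Fin N → Module.End ℂ H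
  rel_hXp : ∀ a, h a * Xp a - Xp a * h a = (2:ℂ) • Xp a
  rel_hXm : ∀ a, h a * Xm a - Xm a * h a = (-2:ℂ) • Xm a
  rel_XpXm : ∀ a, Xp a * Xm a - Xm a * Xp a = h a
  rel_hvp : ∀ a, h a * vp a - vp a * h a = vp a
  rel_hvm : ∀ a, h a * vm a - vm a * h a = -vm a
  rel_vpvm : ∀ a, vp a * vm a + vm a * vp a = -h a
  rel_Xmvp : ∀ a, Xm a * vp a - vp a * Xm a = vm a
  rel_Xpvm : ∀ a, Xp a * vm a - vm a * Xp a = vp a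
  rel_vpvp : ∀ a, vp a * vp a = Xp a
  rel_vmvm : ∀ a, vm a * vm a = -Xm a
  rel_Xpvp : ∀ a, Xp a * vp a = vp a * Xp a
  rel_Xmvm : ∀ a, Xm a * vm a = vm a * Xm a
  even_comm : ∀ a b, a ≠ b → ∀ Y ∈ ({h a, Xp a, Xm a} : Set (Module.End ℂ H)),
      ∀ Z ∈ ({h b, Xp b, Xm b, vp b, vm b} : Set (Module.End ℂ H)), Y * Z = Z * Y
  odd_anticomm : ∀ a b, a ≠ b → ∀ Y ∈ ({vp a, vm a} : Set (Module.End ℂ H)),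
      ∀ Z ∈ ({vp b, vm b} : Set (Module.End ℂ H)), Y * Z + Z * Y = 0

namespace OspGaudinData

variable {N : ℕ} {H : Type*} [AddCommGroup H] [Module ℂ H]

/-- The Gaudin realization h(λ). -/
noncomputable def hl (G : OspGaudinData N H) (lam : ℂ) : Module.End ℂ H :=
  ∑ a, ((lam - G.z a)⁻¹) • G.h a

noncomputable def Xpl (G : OspGaudinData N H) (lam : ℂ) : Module.End ℂ H :=
  ∑ a, ((lam - G.z a)⁻¹) • G.Xp a

noncomputable def Xml (G : OspGaudinData N H) (lam : ℂ) : Module.End ℂ H :=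
  ∑ a, ((lam - G.z a)⁻¹) • G.Xm a

noncomputable def vpl (G : OspGaudinData N H) (lam : ℂ) : Module.End ℂ H :=
  ∑ a, ((lam - G.z a)⁻¹) • G.vp a

noncomputable def vml (G : OspGaudinData N H) (lam : ℂ) : Module.End ℂ H :=
  ∑ a, ((lam - G.z a)⁻¹) • G.vm a

/-- h′(λ) = −Σ_a h_a/(λ − z_a)². -/
noncomputable def hl' (G : OspGaudinData N H) (lam : ℂ) : Module.End ℂ H :=
  -∑ a, (((lam - G.z a)^2)⁻¹) • G.h a

/-- The generating function t(λ) of the integrals of motion. -/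
noncomputable def tOp (G : OspGaudinData N H) (lam : ℂ) : Module.End ℂ H :=
  G.hl lam * G.hl lam + G.hl' lam + (4:ℂ) • (G.Xpl lam * G.Xml lam)
    + (2:ℂ) • (G.vpl lam * G.vml lam)

/-- The Gaudin Hamiltonian at site `a`. -/
noncomputable def Gham (G : OspGaudinData N H) (a : Fin N) : Module.End ℂ H :=
  ∑ b ∈ Finset.univ.erase a, ((G.z a - G.z b)⁻¹) •
    (G.h a * G.h b + (2:ℂ) • (G.Xp a * G.Xm b + G.Xm a * G.Xp b)
      + (G.vp a * G.vm b - G.vm a * G.vp b))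

end OspGaudinData

/-!
Write `r a b` for the two-site osp(1|2) Casimir
`h_a h_b + 2(X⁺_a X⁻_b + X⁻_a X⁺_b) + (v⁺_a v⁻_b − v⁻_a v⁺_b)`, so that
`H^{(a)} = ∑_{c ≠ a} r a c / (z_a − z_c)`. Such Hamiltonians commute for any family `r` with
`r a b = r b a`, `[r a b, r c d] = 0` for disjoint pairs of sites, and the classical Yang–Baxter
relation `[r a b, r a c + r b c] = 0`: in `[H^{(a)}, H^{(b)}]` only brackets sharing a site survive,
and for each third site `c` they are multiples of `[r a c, r a b]` whose coefficients cancel by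
`1/((z_a − z_b)(z_b − z_c)) + 1/((z_b − z_a)(z_a − z_c)) = 1/((z_a − z_c)(z_b − z_c))`.
For the Casimir, `r a c + r b c` is the Casimir of the diagonal copy `x_a + x_b` with site `c`, and
`r a b` commutes with the diagonal generators (osp(1|2)-invariance) and with those of site `c`.
-/

open Finset

section Gaudin

attribute [local instance] LieRing.ofAssociativeRing

variable {ι A : Type*} [Ring A]

theorem smul_lie_smul {K : Type*} [CommSemiring K] [Algebra K A] (c d : K) (x y : A) :
    ⁅c • x, d • y⁆ = (c * d) • ⁅x, y⁆ := by
  simp only [Ring.lie_def, smul_mul_smul_comm, mul_comm d c, smul_sub]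

theorem Finset.lie_sum_sum_of_commute {s : Finset ι} {x y : ι → A}
    (h : ∀ i ∈ s, ∀ j ∈ s, i ≠ j → Commute (x i) (y j)) :
    ⁅∑ i ∈ s, x i, ∑ j ∈ s, y j⁆ = ∑ i ∈ s, ⁅x i, y i⁆ := by
  rw [sum_lie]
  refine sum_congr rfl fun i hi => ?_
  rw [lie_sum]
  exact sum_eq_single_of_mem i hi fun j hj hji => commute_iff_lie_eq.1 (h i hi j hj hji.symm)

theorem lie_eq_neg_lie_of_commute_add {x y w : A} (h : Commute x (y + w)) :
    ⁅x, w⁆ = -⁅x, y⁆ := by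
  rw [commute_iff_lie_eq, lie_add] at h
  exact eq_neg_of_add_eq_zero_right h

theorem inv_sub_mul_inv_sub_add_inv_sub_mul_inv_sub {K : Type*} [Field K] {a b c : K}
    (hab : a ≠ b) (hac : a ≠ c) (hbc : b ≠ c) :
    (a - b)⁻¹ * (b - c)⁻¹ + (a - c)⁻¹ * (b - a)⁻¹ = (a - c)⁻¹ * (b - c)⁻¹ := by
  have := sub_ne_zero.2 hab
  have := sub_ne_zero.2 hac
  have := sub_ne_zero.2 hbc
  have := sub_ne_zero.2 hab.symm
  field_simp
  ring

variable {K : Type*} [Field K] [Algebra K A]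

theorem lie_gaudin_three_sites {z : ι → K} {r : ι → ι → A} (hz : Function.Injective z)
    (hsymm : ∀ a b, a ≠ b → r a b = r b a)
    (hcybe : ∀ a b c, a ≠ b → a ≠ c → b ≠ c → Commute (r a b) (r a c + r b c))
    {a b c : ι} (hab : a ≠ b) (hac : a ≠ c) (hbc : b ≠ c) :
    ⁅(z a - z b)⁻¹ • r a b, (z b - z c)⁻¹ • r b c⁆
      + (⁅(z a - z c)⁻¹ • r a c, (z b - z a)⁻¹ • r a b⁆
        + ⁅(z a - z c)⁻¹ • r a c, (z b - z c)⁻¹ • r b c⁆) = 0 := by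
  have h₁ : ⁅r a b, r b c⁆ = ⁅r a c, r a b⁆ := by
    rw [lie_eq_neg_lie_of_commute_add (hcybe a b c hab hac hbc), lie_skew]
  have h₂ : ⁅r a c, r b c⁆ = -⁅r a c, r a b⁆ := by
    rw [hsymm b c hbc]
    exact lie_eq_neg_lie_of_commute_add (hcybe a c b hac hab hbc.symm)
  rw [smul_lie_smul, smul_lie_smul, smul_lie_smul, h₁, h₂]
  have hcoeff := inv_sub_mul_inv_sub_add_inv_sub_mul_inv_sub (hz.ne hab) (hz.ne hac) (hz.ne hbc)
  linear_combination (norm := module) hcoeff • ⁅r a c, r a b⁆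

variable [Fintype ι] [DecidableEq ι]

def gaudinHam (z : ι → K) (r : ι → ι → A) (a : ι) : A :=
  ∑ c ∈ univ.erase a, (z a - z c)⁻¹ • r a c

variable {z : ι → K} {r : ι → ι → A}

theorem gaudinHam_eq_add_sum {a b : ι} (hab : a ≠ b) :
    gaudinHam z r a =
      (z a - z b)⁻¹ • r a b + ∑ c ∈ (univ.erase a).erase b, (z a - z c)⁻¹ • r a c :=
  (add_sum_erase _ _ (mem_erase.2 ⟨hab.symm, mem_univ b⟩)).symm

theorem gaudinHam_commute (hz : Function.Injective z)
    (hsymm : ∀ a b, a ≠ b → r a b = r b a)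
    (hdisj : ∀ a b c d, a ≠ c → a ≠ d → b ≠ c → b ≠ d → Commute (r a b) (r c d))
    (hcybe : ∀ a b c, a ≠ b → a ≠ c → b ≠ c → Commute (r a b) (r a c + r b c))
    (a b : ι) :
    Commute (gaudinHam z r a) (gaudinHam z r b) := by
  obtain rfl | hab := eq_or_ne a b
  · exact Commute.refl _
  rw [commute_iff_lie_eq, gaudinHam_eq_add_sum hab, gaudinHam_eq_add_sum hab.symm,
    erase_right_comm (a := b) (b := a)]
  set S := (univ.erase a).erase b
  have hS : ∀ c ∈ S, a ≠ c ∧ b ≠ c := fun c hc => by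
    simp only [S, mem_erase] at hc
    exact ⟨hc.2.1.symm, hc.1.symm⟩
  have hdiag :
      ⁅∑ c ∈ S, (z a - z c)⁻¹ • r a c, ∑ d ∈ S, (z b - z d)⁻¹ • r b d⁆ =
        ∑ c ∈ S, ⁅(z a - z c)⁻¹ • r a c, (z b - z c)⁻¹ • r b c⁆ :=
    lie_sum_sum_of_commute fun c hc d hd hcd =>
      ((hdisj a c b d hab (hS d hd).1 (hS c hc).2.symm hcd).smul_left _).smul_right _
  rw [add_lie, lie_add, lie_add, hdiag, smul_lie_smul, ← hsymm a b hab, lie_self, smul_zero,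
    zero_add, lie_sum, sum_lie, ← sum_add_distrib, ← sum_add_distrib]
  exact sum_eq_zero fun c hc => lie_gaudin_three_sites hz hsymm hcybe hab (hS c hc).1 (hS c hc).2

end Gaudin

theorem commute_mul_of_anticommute {R : Type*} [Ring R] {x x' y : R} (hx : x * y + y * x = 0)
    (hx' : x' * y + y * x' = 0) : Commute (x * x') y := by
  rw [commute_iff_eq]
  linear_combination (norm := noncomm_ring) x * hx' - hx * x'

structure OspGens (R : Type*) where
  h : R
  xp : R
  xm : R
  vp : R
  vm : R

namespace OspGens

variable {R : Type*} [Ring R]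

/-- The diagonal copy `x ↦ x_s + x_t` of osp(1|2). -/
@[simps]
instance : Add (OspGens R) :=
  ⟨fun s t => ⟨s.h + t.h, s.xp + t.xp, s.xm + t.xm, s.vp + t.vp, s.vm + t.vm⟩⟩

structure IsRep (s : OspGens R) : Prop where
  h_xp : s.h * s.xp - s.xp * s.h = 2 * s.xp
  h_xm : s.h * s.xm - s.xm * s.h = -(2 * s.xm)
  xp_xm : s.xp * s.xm - s.xm * s.xp = s.h
  h_vp : s.h * s.vp - s.vp * s.h = s.vp
  h_vm : s.h * s.vm - s.vm * s.h = -s.vm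
  vp_vm : s.vp * s.vm + s.vm * s.vp = -s.h
  xm_vp : s.xm * s.vp - s.vp * s.xm = s.vm
  xp_vm : s.xp * s.vm - s.vm * s.xp = s.vp
  vp_vp : s.vp * s.vp = s.xp
  vm_vm : s.vm * s.vm = -s.xm
  xp_vp : Commute s.xp s.vp
  xm_vm : Commute s.xm s.vm

structure SupercommuteEven (s : OspGens R) (y : R) : Prop where
  h : Commute s.h y
  xp : Commute s.xp y
  xm : Commute s.xm y
  vp : Commute s.vp y
  vm : Commute s.vm y

structure SupercommuteOdd (s : OspGens R) (y : R) : Prop where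
  h : Commute s.h y
  xp : Commute s.xp y
  xm : Commute s.xm y
  vp : s.vp * y + y * s.vp = 0
  vm : s.vm * y + y * s.vm = 0

structure Supercommute (s t : OspGens R) : Prop where
  h : s.SupercommuteEven t.h
  xp : s.SupercommuteEven t.xp
  xm : s.SupercommuteEven t.xm
  vp : s.SupercommuteOdd t.vp
  vm : s.SupercommuteOdd t.vm

def casimir (s t : OspGens R) : R :=
  s.h * t.h + 2 * (s.xp * t.xm + s.xm * t.xp) + (s.vp * t.vm - s.vm * t.vp)

variable {s t u w : OspGens R}

theorem casimir_add_left : (s + t).casimir u = s.casimir u + t.casimir u := by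
  simp only [casimir, add_h, add_xp, add_xm, add_vp, add_vm]
  noncomm_ring

theorem Supercommute.casimir_comm (hst : s.Supercommute t) : s.casimir t = t.casimir s := by
  rw [casimir, casimir, hst.h.h.eq, hst.xm.xp.eq, hst.xp.xm.eq,
    eq_neg_of_add_eq_zero_left hst.vm.vp, eq_neg_of_add_eq_zero_left hst.vp.vm]
  noncomm_ring

theorem casimir_commute_of_even {y : R} (hs : s.SupercommuteEven y) (ht : t.SupercommuteEven y) :
    Commute (s.casimir t) y :=
  ((hs.h.mul_left ht.h).add_left ((Commute.ofNat_left 2 y).mul_left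
    ((hs.xp.mul_left ht.xm).add_left (hs.xm.mul_left ht.xp)))).add_left
    ((hs.vp.mul_left ht.vm).sub_left (hs.vm.mul_left ht.vp))

theorem casimir_commute_of_odd {y : R} (hs : s.SupercommuteOdd y) (ht : t.SupercommuteOdd y) :
    Commute (s.casimir t) y :=
  ((hs.h.mul_left ht.h).add_left ((Commute.ofNat_left 2 y).mul_left
    ((hs.xp.mul_left ht.xm).add_left (hs.xm.mul_left ht.xp)))).add_left
    ((commute_mul_of_anticommute hs.vp ht.vm).sub_left (commute_mul_of_anticommute hs.vm ht.vp))

theorem supercommuteEven_casimir (hsu : s.Supercommute u) (htu : t.Supercommute u) :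
    u.SupercommuteEven (s.casimir t) :=
  ⟨(casimir_commute_of_even hsu.h htu.h).symm, (casimir_commute_of_even hsu.xp htu.xp).symm,
    (casimir_commute_of_even hsu.xm htu.xm).symm, (casimir_commute_of_odd hsu.vp htu.vp).symm,
    (casimir_commute_of_odd hsu.vm htu.vm).symm⟩

theorem casimir_commute_casimir (hsu : s.Supercommute u) (hsw : s.Supercommute w)
    (htu : t.Supercommute u) (htw : t.Supercommute w) : Commute (s.casimir t) (u.casimir w) :=
  (casimir_commute_of_even (supercommuteEven_casimir hsu htu)
    (supercommuteEven_casimir hsw htw)).symm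

/- osp(1|2)-invariance of the Casimir. Each certificate expands the (super)commutator of a diagonal
generator with every term `x_s y_t` of the Casimir by the Leibniz rule. -/
theorem casimir_commute_add_h (hs : s.IsRep) (ht : t.IsRep) (hst : s.Supercommute t) :
    Commute (s.casimir t) (s + t).h := by
  rw [commute_iff_eq, casimir, add_h]
  linear_combination (norm := noncomm_ring)
    -(s.h * hst.h.h.eq) + hst.h.h.eq * t.h
    + 2 * (-(hs.h_xp * t.xm) - s.xp * hst.xm.h.eq + hst.h.xp.eq * t.xm - s.xp * ht.h_xm)
    + 2 * (-(hs.h_xm * t.xp) - s.xm * hst.xp.h.eq + hst.h.xm.eq * t.xp - s.xm * ht.h_xp)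
    + (-(hs.h_vp * t.vm) - s.vp * hst.vm.h.eq + hst.h.vp.eq * t.vm - s.vp * ht.h_vm)
    - (-(hs.h_vm * t.vp) - s.vm * hst.vp.h.eq + hst.h.vm.eq * t.vp - s.vm * ht.h_vp)

theorem casimir_commute_add_xp (hs : s.IsRep) (ht : t.IsRep) (hst : s.Supercommute t) :
    Commute (s.casimir t) (s + t).xp := by
  rw [commute_iff_eq, casimir, add_xp]
  linear_combination (norm := noncomm_ring)
    (-(s.h * hst.h.xp.eq) + hs.h_xp * t.h) + (s.h * ht.h_xp + hst.xp.h.eq * t.h)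
    + 2 * (-(s.xp * hst.xm.xp.eq)) + 2 * (-(s.xp * ht.xp_xm) + hst.xp.xp.eq * t.xm)
    + 2 * (-(s.xm * hst.xp.xp.eq) - hs.xp_xm * t.xp) + 2 * (hst.xp.xm.eq * t.xp)
    + (-(s.vp * hst.vm.xp.eq) - hs.xp_vp.eq * t.vm) + (-(s.vp * ht.xp_vm) + hst.xp.vp.eq * t.vm)
    - (-(s.vm * hst.vp.xp.eq) - hs.xp_vm * t.vp) - (-(s.vm * ht.xp_vp.eq) + hst.xp.vm.eq * t.vp)

theorem casimir_commute_add_xm (hs : s.IsRep) (ht : t.IsRep) (hst : s.Supercommute t) :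
    Commute (s.casimir t) (s + t).xm := by
  rw [commute_iff_eq, casimir, add_xm]
  linear_combination (norm := noncomm_ring)
    (-(s.h * hst.h.xm.eq) + hs.h_xm * t.h) + (s.h * ht.h_xm + hst.xm.h.eq * t.h)
    + 2 * (-(s.xp * hst.xm.xm.eq) + hs.xp_xm * t.xm) + 2 * (hst.xm.xp.eq * t.xm)
    + 2 * (-(s.xm * hst.xp.xm.eq)) + 2 * (s.xm * ht.xp_xm + hst.xm.xm.eq * t.xp)
    + (-(s.vp * hst.vm.xm.eq) - hs.xm_vp * t.vm) + (-(s.vp * ht.xm_vm.eq) + hst.xm.vp.eq * t.vm)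
    - (-(s.vm * hst.vp.xm.eq) - hs.xm_vm.eq * t.vp) - (-(s.vm * ht.xm_vp) + hst.xm.vm.eq * t.vp)

theorem casimir_commute_add_vp (hs : s.IsRep) (ht : t.IsRep) (hst : s.Supercommute t) :
    Commute (s.casimir t) (s + t).vp := by
  rw [commute_iff_eq, casimir, add_vp]
  linear_combination (norm := noncomm_ring)
    (-(s.h * hst.h.vp.eq) + hs.h_vp * t.h) + (s.h * ht.h_vp + hst.vp.h.eq * t.h)
    + 2 * (-(s.xp * hst.xm.vp.eq) + hs.xp_vp.eq * t.xm)
    + 2 * (s.xp * ht.xm_vp + hst.vp.xp.eq * t.xm)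
    + 2 * (-(s.xm * hst.xp.vp.eq) + hs.xm_vp * t.xp)
    + 2 * (s.xm * ht.xp_vp.eq + hst.vp.xm.eq * t.xp)
    + (s.vp * hst.vm.vp - 2 * (hs.vp_vp * t.vm)) + (s.vp * ht.vp_vm - hst.vp.vp * t.vm)
    - (s.vm * hst.vp.vp - hs.vp_vm * t.vp) - (2 * (s.vm * ht.vp_vp) - hst.vp.vm * t.vp)

theorem casimir_commute_add_vm (hs : s.IsRep) (ht : t.IsRep) (hst : s.Supercommute t) :
    Commute (s.casimir t) (s + t).vm := by
  rw [commute_iff_eq, casimir, add_vm]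
  linear_combination (norm := noncomm_ring)
    (-(s.h * hst.h.vm.eq) + hs.h_vm * t.h) + (s.h * ht.h_vm + hst.vm.h.eq * t.h)
    + 2 * (-(s.xp * hst.xm.vm.eq) + hs.xp_vm * t.xm)
    + 2 * (s.xp * ht.xm_vm.eq + hst.vm.xp.eq * t.xm)
    + 2 * (-(s.xm * hst.xp.vm.eq) + hs.xm_vm.eq * t.xp)
    + 2 * (s.xm * ht.xp_vm + hst.vm.xm.eq * t.xp)
    + (s.vp * hst.vm.vm - hs.vp_vm * t.vm) + (2 * (s.vp * ht.vm_vm) - hst.vm.vp * t.vm)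
    - (s.vm * hst.vp.vm - 2 * (hs.vm_vm * t.vp)) - (s.vm * ht.vp_vm - hst.vm.vm * t.vp)

theorem supercommuteEven_add_casimir (hs : s.IsRep) (ht : t.IsRep) (hst : s.Supercommute t) :
    (s + t).SupercommuteEven (s.casimir t) :=
  ⟨(casimir_commute_add_h hs ht hst).symm, (casimir_commute_add_xp hs ht hst).symm,
    (casimir_commute_add_xm hs ht hst).symm, (casimir_commute_add_vp hs ht hst).symm,
    (casimir_commute_add_vm hs ht hst).symm⟩

theorem casimir_commute_casimir_add_casimir (hs : s.IsRep) (ht : t.IsRep)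
    (hst : s.Supercommute t) (hsu : s.Supercommute u) (htu : t.Supercommute u) :
    Commute (s.casimir t) (s.casimir u + t.casimir u) := by
  rw [← casimir_add_left]
  exact (casimir_commute_of_even (supercommuteEven_add_casimir hs ht hst)
    (supercommuteEven_casimir hsu htu)).symm

end OspGens

namespace OspGaudinData

variable {N : ℕ} {H : Type*} [AddCommGroup H] [Module ℂ H] (G : OspGaudinData N H)

def site (a : Fin N) : OspGens (Module.End ℂ H) := ⟨G.h a, G.Xp a, G.Xm a, G.vp a, G.vm a⟩

theorem site_isRep (a : Fin N) : (G.site a).IsRep where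
  h_xp := (G.rel_hXp a).trans (by rw [two_smul, two_mul]; rfl)
  h_xm := (G.rel_hXm a).trans (by rw [neg_smul, two_smul, two_mul]; rfl)
  xp_xm := G.rel_XpXm a
  h_vp := G.rel_hvp a
  h_vm := G.rel_hvm a
  vp_vm := G.rel_vpvm a
  xm_vp := G.rel_Xmvp a
  xp_vm := G.rel_Xpvm a
  vp_vp := G.rel_vpvp a
  vm_vm := G.rel_vmvm a
  xp_vp := G.rel_Xpvp a
  xm_vm := G.rel_Xmvm a

theorem site_supercommute {a b : Fin N} (hab : a ≠ b) : (G.site a).Supercommute (G.site b) := by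
  have ev {Y Z : Module.End ℂ H} (hY : Y ∈ ({G.h a, G.Xp a, G.Xm a} : Set _))
      (hZ : Z ∈ ({G.h b, G.Xp b, G.Xm b, G.vp b, G.vm b} : Set _)) : Commute Y Z :=
    G.even_comm a b hab Y hY Z hZ
  have ev' {Y Z : Module.End ℂ H} (hY : Y ∈ ({G.vp a, G.vm a} : Set _))
      (hZ : Z ∈ ({G.h b, G.Xp b, G.Xm b} : Set _)) : Commute Y Z :=
    (G.even_comm b a hab.symm Z hZ Y (by aesop)).symm
  have od {Y Z : Module.End ℂ H} (hY : Y ∈ ({G.vp a, G.vm a} : Set _))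
      (hZ : Z ∈ ({G.vp b, G.vm b} : Set _)) : Y * Z + Z * Y = 0 :=
    G.odd_anticomm a b hab Y hY Z hZ
  refine ⟨⟨ev ?_ ?_, ev ?_ ?_, ev ?_ ?_, ev' ?_ ?_, ev' ?_ ?_⟩,
    ⟨ev ?_ ?_, ev ?_ ?_, ev ?_ ?_, ev' ?_ ?_, ev' ?_ ?_⟩,
    ⟨ev ?_ ?_, ev ?_ ?_, ev ?_ ?_, ev' ?_ ?_, ev' ?_ ?_⟩,
    ⟨ev ?_ ?_, ev ?_ ?_, ev ?_ ?_, od ?_ ?_, od ?_ ?_⟩,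
    ⟨ev ?_ ?_, ev ?_ ?_, ev ?_ ?_, od ?_ ?_, od ?_ ?_⟩⟩ <;> simp [site]

theorem Gham_eq_gaudinHam (a : Fin N) :
    G.Gham a = gaudinHam G.z (fun a b => (G.site a).casimir (G.site b)) a := by
  simp only [Gham, gaudinHam, OspGens.casimir, site, two_smul, two_mul]

end OspGaudinData

theorem Gham_commute_general {N : ℕ} {H : Type*} [AddCommGroup H] [Module ℂ H]
    (G : OspGaudinData N H) (a b : Fin N) :
    G.Gham a * G.Gham b - G.Gham b * G.Gham a = 0 := by
  have hsc := @G.site_supercommute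
  have hcomm := gaudinHam_commute G.z_inj (r := fun a b => (G.site a).casimir (G.site b))
    (fun a b hab => (hsc hab).casimir_comm)
    (fun a b c d hac had hbc hbd =>
      OspGens.casimir_commute_casimir (hsc hac) (hsc had) (hsc hbc) (hsc hbd))
    (fun a b c hab hac hbc => OspGens.casimir_commute_casimir_add_casimir (G.site_isRep a)
      (G.site_isRep b) (hsc hab) (hsc hac) (hsc hbc)) a b
  rw [G.Gham_eq_gaudinHam, G.Gham_eq_gaudinHam, sub_eq_zero]
  exact hcomm.eq

/-- the Gaudin Hamiltonians pairwise commute. -/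
theorem Gham_commute {N : ℕ} {H : Type*} [AddCommGroup H] [Module ℂ H]
    (hN : 1 ≤ N) (G : OspGaudinData N H) (a b : Fin N) :
    G.Gham a * G.Gham b - G.Gham b * G.Gham a = 0 :=
  Gham_commute_general G a b
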